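/- arXiv:1702.00980 — 6 statements merged into one kernel-verified Lean document; each statement's English description precedes it below -/
import Mathlib

section
/- Over the max-plus semiring, for all n×n matrices A, B over ℝ_max the tropical adjoint satisfies adj(A⊙B) ≥ adj(B) ⊙ adj(A) entrywise. -/
open Matrix

noncomputable section

/-- The max-plus semiring `ℝ_max = ℝ ∪ {−∞}`: addition is `max` (the lattice `⊔`),
multiplication is `+` with `⊥ = −∞` absorbing. -/
abbrev Rmax : Type := WithBot ℝ

/-- Tropical matrix product: `(A ⊙ B) i j = max_t (A i t + B t j)`. -/
def tropMul {l m p : Type*} [Fintype m] (A : Matrix l m Rmax) (B : Matrix m p Rmax) :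
    Matrix l p Rmax :=
  Matrix.of fun i j => Finset.univ.sup fun t => A i t + B t j

/-- The tropical identity matrix: `0` on the diagonal, `−∞` elsewhere. -/
def tropId (m : Type*) [DecidableEq m] : Matrix m m Rmax :=
  Matrix.of fun i j => if i = j then (0 : Rmax) else ⊥

/-- Tropical permanent: maximum over permutations of the sum of the selected entries. -/
def tropPer {m : Type*} [Fintype m] [DecidableEq m] (A : Matrix m m Rmax) : Rmax :=
  Finset.univ.sup fun σ : Equiv.Perm m => ∑ i, A i (σ i)

/-- Tropical trace: maximum of the diagonal entries. -/
def tropTrace {m : Type*} [Fintype m] (A : Matrix m m Rmax) : Rmax :=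
  Finset.univ.sup fun i => A i i

/-- The type of `k`-element subsets of `{1,…,n}`. -/
abbrev KSub (n k : ℕ) : Type := {I : Finset (Fin n) // I.card = k}

/-- The `k`-th compound matrix: indexed by `k`-element subsets; the `(I,J)` entry is the
maximum over bijections `σ : I → J` of `∑_{i ∈ I} A i (σ i)`. -/
def compound {n : ℕ} (k : ℕ) (A : Matrix (Fin n) (Fin n) Rmax) :
    Matrix (KSub n k) (KSub n k) Rmax :=
  Matrix.of fun I J =>
    Finset.univ.sup fun σ : {x // x ∈ I.1} ≃ {x // x ∈ J.1} =>
      ∑ i : {x // x ∈ I.1}, A i.1 (σ i).1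

/-- Tropical adjoint: `adj(A) i j = per(A_{(j,i)})`, deleting row `j` and column `i`. -/
def tropAdj {n : ℕ} (A : Matrix (Fin (n+1)) (Fin (n+1)) Rmax) :
    Matrix (Fin (n+1)) (Fin (n+1)) Rmax :=
  Matrix.of fun i j => tropPer (A.submatrix j.succAbove i.succAbove)

/-- Quasi-inverse `A^∇` of a nonsingular matrix: `(A^∇) i j = adj(A) i j − per(A)`. -/
def tropQInv {n : ℕ} (A : Matrix (Fin (n+1)) (Fin (n+1)) Rmax) :
    Matrix (Fin (n+1)) (Fin (n+1)) Rmax :=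
  Matrix.of fun i j => tropAdj A i j + ((- ((tropPer A).unbotD 0) : ℝ) : Rmax)

/-- A matrix over `ℝ_max` is invertible iff it is a monomial (generalized permutation) matrix. -/
def IsMonomial {n : ℕ} (A : Matrix (Fin n) (Fin n) Rmax) : Prop :=
  ∃ (π : Equiv.Perm (Fin n)) (d : Fin n → ℝ),
    ∀ i j, A i j = if j = π i then ((d i : ℝ) : Rmax) else ⊥

/-- `m`-fold tropical power of a square matrix (`A^{⊙0}` is the tropical identity). -/
def tropPow {m : Type*} [Fintype m] [DecidableEq m] (A : Matrix m m Rmax) : ℕ → Matrix m m Rmax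
  | 0 => tropId m
  | k + 1 => tropMul (tropPow A k) A

/-! For every `t`, deleting row `j` and column `i` of `A ⊙ B` leaves a matrix that dominates
the product of `A` without row `j` and column `t` with `B` without row `t` and column `i`.
The tropical permanent is monotone and supermultiplicative, `per A + per B ≤ per (A ⊙ B)`,
so `adj(B) i t + adj(A) t j ≤ adj(A ⊙ B) i j`. -/

theorem tropPer_mono {m : Type*} [Fintype m] [DecidableEq m] {A B : Matrix m m Rmax}
    (h : ∀ i j, A i j ≤ B i j) : tropPer A ≤ tropPer B :=
  Finset.sup_mono_fun fun σ _ => Finset.sum_le_sum fun i _ => h i (σ i)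

theorem tropPer_add_tropPer_le_tropPer_tropMul {m : Type*} [Fintype m] [DecidableEq m]
    (A B : Matrix m m Rmax) : tropPer A + tropPer B ≤ tropPer (tropMul A B) := by
  obtain ⟨σ, -, hσ⟩ := Finset.exists_mem_eq_sup Finset.univ Finset.univ_nonempty
    fun σ : Equiv.Perm m => ∑ i, A i (σ i)
  obtain ⟨τ, -, hτ⟩ := Finset.exists_mem_eq_sup Finset.univ Finset.univ_nonempty
    fun τ : Equiv.Perm m => ∑ i, B i (τ i)
  -- route row `i` through the column `σ i` chosen by `σ`, so that `σ.trans τ` is the witness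
  calc tropPer A + tropPer B
      = ∑ i, (A i (σ i) + B (σ i) (τ (σ i))) := by
        rw [tropPer, tropPer, hσ, hτ, Finset.sum_add_distrib,
          Equiv.sum_comp σ fun k => B k (τ k)]
    _ ≤ ∑ i, tropMul A B i ((σ.trans τ) i) :=
        Finset.sum_le_sum fun i _ => Finset.le_sup (f := fun t => A i t + B t (τ (σ i)))
          (Finset.mem_univ (σ i))
    _ ≤ tropPer (tropMul A B) :=
        Finset.le_sup (f := fun π : Equiv.Perm m => ∑ i, tropMul A B i (π i))
          (Finset.mem_univ _)

theorem tropMul_submatrix_le {l m m' p l' p' : Type*} [Fintype m] [Fintype m']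
    (A : Matrix l m Rmax) (B : Matrix m p Rmax) (r : l' → l) (e : m' → m) (c : p' → p)
    (i : l') (j : p') :
    tropMul (A.submatrix r e) (B.submatrix e c) i j ≤ (tropMul A B).submatrix r c i j :=
  Finset.sup_le fun t _ =>
    Finset.le_sup (f := fun s => A (r i) s + B s (c j)) (Finset.mem_univ (e t))

/-- `adj(A⊙B) ≥ adj(B) ⊙ adj(A)` entrywise. -/
theorem tropAdj_mul_ge {n : ℕ} (A B : Matrix (Fin (n+1)) (Fin (n+1)) Rmax)
    (i j : Fin (n+1)) :
    tropMul (tropAdj B) (tropAdj A) i j ≤ tropAdj (tropMul A B) i j := by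
  rw [tropMul, Matrix.of_apply]
  refine Finset.sup_le fun t _ => ?_
  calc tropAdj B i t + tropAdj A t j
      = tropPer (A.submatrix j.succAbove t.succAbove)
          + tropPer (B.submatrix t.succAbove i.succAbove) := add_comm _ _
    _ ≤ tropPer (tropMul (A.submatrix j.succAbove t.succAbove)
          (B.submatrix t.succAbove i.succAbove)) :=
        tropPer_add_tropPer_le_tropPer_tropMul _ _
    _ ≤ tropAdj (tropMul A B) i j :=
        tropPer_mono (tropMul_submatrix_le A B _ _ _)
end
end

section
/- Tropical Jacobi identity for invertible matrices over the max-plus semiring: if A is an invertible (monomial) n×n matrix over ℝ_max, then for every k with 1 ≤ k ≤ n−1 and all k-element subsets I, J of {1,…,n}, one has per(A) + (A^{−1})^{∧(n−k)}_{J^c, I^c} = A^{∧k}_{I,J}, where I^c, J^c denote complements in {1,…,n} and the sum is in ℝ ∪ {−∞} with −∞ absorbing. -/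
open Matrix

noncomputable section

/-!
A right inverse of the monomial matrix with permutation `π` and weights `d` is forced to be
the monomial matrix with permutation `π⁻¹` and weights `-d ∘ π⁻¹`. The compound of a monomial
matrix is monomial again: its `(I, J)` entry is finite exactly when `π` maps `I` onto `J`, and
then equals `∑_{i ∈ I} d i`. Since `π` maps `I` onto `J` iff `π⁻¹` maps `Jᶜ` onto `Iᶜ`, both
sides of the identity are `−∞` together, and otherwise it reads `∑ d - ∑_{Iᶜ} d = ∑_I d`.
-/

open Finset

theorem Finset.sup_univ_eq_of_forall_ne {α β : Type*} [Fintype α] [SemilatticeSup β]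
    [OrderBot β] {f : α → β} (a : α) (h : ∀ b, b ≠ a → f b = ⊥) : univ.sup f = f a :=
  le_antisymm
    (Finset.sup_le fun b _ => by
      rcases eq_or_ne b a with rfl | hb
      · exact le_rfl
      · simp [h b hb])
    (le_sup (mem_univ a))

def monomialMatrix {m : Type*} [DecidableEq m] (π : Equiv.Perm m) (d : m → ℝ) :
    Matrix m m Rmax :=
  Matrix.of fun i j => if j = π i then ((d i : ℝ) : Rmax) else ⊥

namespace monomialMatrix

variable {m : Type*} [DecidableEq m] (π : Equiv.Perm m) (d : m → ℝ)

open Classical in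
theorem sum_apply {ι : Type*} [Fintype ι] (g f : ι → m) :
    ∑ i, monomialMatrix π d (g i) (f i) =
      if ∀ i, f i = π (g i) then ((∑ i, d (g i) : ℝ) : Rmax) else ⊥ := by
  split_ifs with h
  · simp [monomialMatrix, h]
  · push Not at h
    obtain ⟨i, hi⟩ := h
    exact WithBot.sum_eq_bot_iff.mpr ⟨i, mem_univ i, by simp [monomialMatrix, hi]⟩

theorem tropMul_apply [Fintype m] (B : Matrix m m Rmax) (i j : m) :
    tropMul (monomialMatrix π d) B i j = ((d i : ℝ) : Rmax) + B (π i) j := by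
  rw [tropMul, Matrix.of_apply, Finset.sup_univ_eq_of_forall_ne (π i)]
  · simp [monomialMatrix]
  · intro t ht
    simp [monomialMatrix, ht]

theorem tropPer_eq [Fintype m] : tropPer (monomialMatrix π d) = ((∑ i, d i : ℝ) : Rmax) := by
  rw [tropPer, Finset.sup_univ_eq_of_forall_ne π]
  · simp [sum_apply]
  · intro σ hσ
    rw [sum_apply, if_neg fun h => hσ (Equiv.ext h)]

theorem eq_of_tropMul_eq_tropId [Fintype m] {B : Matrix m m Rmax}
    (h : tropMul (monomialMatrix π d) B = tropId m) :
    B = monomialMatrix π.symm fun j => -d (π.symm j) := by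
  ext j t
  obtain ⟨i, rfl⟩ := π.surjective j
  have hij : ((d i : ℝ) : Rmax) + B (π i) t = if i = t then 0 else ⊥ := by
    rw [← tropMul_apply, h, tropId, Matrix.of_apply]
  -- `d i` is a unit of `ℝ_max`, so `hij` can be solved for `B (π i) t`.
  have hB : B (π i) t = ((-d i : ℝ) : Rmax) + ((d i : ℝ) : Rmax) + B (π i) t := by
    rw [← WithBot.coe_add, neg_add_cancel, WithBot.coe_zero, zero_add]
  rw [hB, add_assoc, hij, monomialMatrix, Matrix.of_apply]
  by_cases hit : i = t
  · simp [hit]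
  · simp [hit, Ne.symm hit]

end monomialMatrix

section compound

variable {n : ℕ} (π : Equiv.Perm (Fin n)) (d : Fin n → ℝ)

open Classical in
theorem compound_monomialMatrix_apply {k : ℕ} (I J : KSub n k) :
    compound k (monomialMatrix π d) I J =
      if ∀ i, i ∈ I.1 ↔ π i ∈ J.1 then ((∑ i ∈ I.1, d i : ℝ) : Rmax) else ⊥ := by
  simp only [compound, Matrix.of_apply, monomialMatrix.sum_apply]
  split_ifs with hIJ
  · let σ₀ : {x // x ∈ I.1} ≃ {x // x ∈ J.1} := π.subtypeEquiv hIJ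
    rw [sup_univ_eq_of_forall_ne σ₀]
    · rw [if_pos (show ∀ i, (σ₀ i : Fin n) = π i from fun _ => rfl), sum_coe_sort I.1 d]
    · intro σ hσ
      exact if_neg fun h => hσ (Equiv.ext fun i => Subtype.ext (h i))
  · refine (Finset.sup_eq_bot_iff _ _).mpr fun σ _ => if_neg fun h => hIJ fun i => ⟨?_, ?_⟩
    · exact fun hi => h ⟨i, hi⟩ ▸ (σ ⟨i, hi⟩).2
    · intro hi
      have h' := h (σ.symm ⟨π i, hi⟩)
      rw [Equiv.apply_symm_apply] at h'
      exact π.injective h' ▸ (σ.symm ⟨π i, hi⟩).2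

end compound

/-- Tropical Jacobi identity for invertible (monomial) matrices:
`per(A) + (A^{−1})^{∧(n−k)}_{Jᶜ,Iᶜ} = A^{∧k}_{I,J}`. -/
theorem tropical_jacobi_of_monomial {n : ℕ} (A Ainv : Matrix (Fin n) (Fin n) Rmax)
    (hA : IsMonomial A)
    (h1 : tropMul A Ainv = tropId (Fin n))
    (k : ℕ)
    (I J : KSub n k) :
    tropPer A +
        compound (n - k) Ainv
          ⟨J.1ᶜ, by simp [Finset.card_compl, J.2]⟩
          ⟨I.1ᶜ, by simp [Finset.card_compl, I.2]⟩
      = compound k A I J := by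
  obtain ⟨π, d, hAd⟩ := hA
  obtain rfl : A = monomialMatrix π d := Matrix.ext hAd
  obtain rfl := monomialMatrix.eq_of_tropMul_eq_tropId π d h1
  rw [monomialMatrix.tropPer_eq, compound_monomialMatrix_apply, compound_monomialMatrix_apply]
  dsimp only
  by_cases hIJ : ∀ i, i ∈ I.1 ↔ π i ∈ J.1
  · have hIJc : ∀ j, j ∈ J.1ᶜ ↔ π.symm j ∈ I.1ᶜ := by simp [hIJ]
    rw [if_pos hIJ, if_pos hIJc, sum_equiv π.symm hIJc (g := fun i => -d i) fun _ _ => rfl,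
      ← WithBot.coe_add, sum_neg_distrib, ← sum_add_sum_compl I.1 d]
    norm_num
  · have hIJc : ¬ ∀ j, j ∈ J.1ᶜ ↔ π.symm j ∈ I.1ᶜ :=
      fun h => hIJ fun i => (not_iff_not.mp (by simpa using h (π i))).symm
    rw [if_neg hIJ, if_neg hIJc, WithBot.add_bot]
end
end

section
/- Over the max-plus semiring, let A be an n×n matrix over ℝ_max such that A_{i,i} = 0 for all i and A⊙A = A (so A equals its own Kleene star A*). Then for every k with 1 ≤ k ≤ n−1 and all k-element subsets I, J of {1,…,n}, one has A^{∧(n−k)}_{J^c, I^c} = A^{∧k}_{I,J}, where I^c, J^c denote complements in {1,…,n}. -/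
open Matrix

noncomputable section

/-! For `A` with zero diagonal and `A i t + A t j ≤ A i j`, the optimal assignment value
`subPer A X Y` of `A[X, Y]` equals that of `A[X \ Y, Y \ X]`: an index `j ∈ X ∩ Y` can always
be matched to itself at no loss, since an assignment `a ↦ j ↦ b` is dominated by `a ↦ b, j ↦ j`.
For complements, `Jᶜ \ Iᶜ = I \ J` and `Iᶜ \ Jᶜ = J \ I`, so both entries reduce to the same
value. -/

open Finset

section SubPer

variable {ι R : Type*} [DecidableEq ι] [AddCommMonoid R] {A : Matrix ι ι R} {X Y : Finset ι}
  {j : ι}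

theorem sum_le_sum_comp_swap [PartialOrder R] [IsOrderedAddMonoid R] (hdiag : ∀ i, A i i = 0)
    (htrans : ∀ i t k, A i t + A t k ≤ A i k) {f : ι → ι} {a : ι} (ha : a ∈ X) (hj : j ∈ X)
    (hfa : f a = j) : ∑ i ∈ X, A i (f i) ≤ ∑ i ∈ X, A i (f (Equiv.swap a j i)) := by
  obtain rfl | haj := eq_or_ne a j
  · simp
  have hj' : j ∈ X.erase a := mem_erase.2 ⟨haj.symm, hj⟩
  rw [← add_sum_erase X _ ha, ← add_sum_erase X _ ha, ← add_sum_erase _ _ hj',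
    ← add_sum_erase _ _ hj', Equiv.swap_apply_left, Equiv.swap_apply_right, hfa, hdiag, zero_add,
    ← add_assoc]
  refine add_le_add (htrans a j (f j)) (sum_le_sum fun i hi => ?_)
  obtain ⟨hij, hia, -⟩ : i ≠ j ∧ i ≠ a ∧ i ∈ X := by simpa using hi
  rw [Equiv.swap_apply_of_ne_of_ne hia hij]

variable [SemilatticeSup R] [OrderBot R]

def subPer (A : Matrix ι ι R) (X Y : Finset ι) : R :=
  univ.sup fun σ : X ≃ Y => ∑ i : X, A i.1 (σ i).1

theorem le_subPer_of_bijOn {f : ι → ι} (hf : Set.BijOn f X Y) :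
    ∑ i ∈ X, A i (f i) ≤ subPer A X Y := by
  rw [← sum_coe_sort]
  exact le_sup (f := fun σ : X ≃ Y => ∑ i : X, A i.1 (σ i).1) (mem_univ (hf.equiv f))

theorem subPer_le_of_bijOn {c : R} (h : ∀ f : ι → ι, Set.BijOn f X Y → ∑ i ∈ X, A i (f i) ≤ c) :
    subPer A X Y ≤ c := by
  refine Finset.sup_le fun σ _ => ?_
  let f : ι → ι := fun i => if hi : i ∈ X then σ ⟨i, hi⟩ else i
  have hf : Set.BijOn f X Y := by
    refine ⟨fun i hi => by simp [f, mem_coe.1 hi], fun i hi i' hi' h => ?_, fun y hy => ?_⟩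
    · simpa [f, mem_coe.1 hi, mem_coe.1 hi', Subtype.ext_iff] using h
    · exact ⟨σ.symm ⟨y, hy⟩, (σ.symm ⟨y, hy⟩).2, by simp [f]⟩
  calc ∑ i : X, A i.1 (σ i).1 = ∑ i ∈ X, A i (f i) := by
        rw [← sum_coe_sort X]; simp [f]
    _ ≤ c := h f hf

theorem subPer_erase_le (hdiag : ∀ i, A i i = 0) (hjX : j ∈ X) (hjY : j ∈ Y) :
    subPer A (X.erase j) (Y.erase j) ≤ subPer A X Y := by
  refine subPer_le_of_bijOn fun f hf => ?_
  have hg : Set.BijOn (Function.update f j j) (X.erase j) (Y.erase j) :=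
    hf.congr fun i hi => by simp [Function.update_of_ne (ne_of_mem_erase hi)]
  have hg' : Set.BijOn (Function.update f j j) X Y := by
    have := hg.insert (a := j) (by simp)
    rwa [Function.update_self, ← coe_insert, ← coe_insert, insert_erase hjX,
      insert_erase hjY] at this
  calc ∑ i ∈ X.erase j, A i (f i) = ∑ i ∈ X, A i (Function.update f j j i) := by
        rw [← add_sum_erase X _ hjX, Function.update_self, hdiag, zero_add]
        exact sum_congr rfl fun i hi => by rw [Function.update_of_ne (ne_of_mem_erase hi)]
    _ ≤ subPer A X Y := le_subPer_of_bijOn hg'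

theorem subPer_le_erase [IsOrderedAddMonoid R] (hdiag : ∀ i, A i i = 0)
    (htrans : ∀ i t k, A i t + A t k ≤ A i k) (hjX : j ∈ X) (hjY : j ∈ Y) :
    subPer A X Y ≤ subPer A (X.erase j) (Y.erase j) := by
  refine subPer_le_of_bijOn fun f hf => ?_
  obtain ⟨a, ha, hfa⟩ := hf.surjOn hjY
  set g := f ∘ Equiv.swap a j
  have hgj : g j = j := by simp [g, hfa]
  have hg : Set.BijOn g (X.erase j) (Y.erase j) := by
    simpa [hfa] using (hf.comp (Equiv.bijOn_swap ha hjX)).sdiff_singleton (mem_coe.2 hjX)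
  calc ∑ i ∈ X, A i (f i) ≤ ∑ i ∈ X, A i (g i) := sum_le_sum_comp_swap hdiag htrans ha hjX hfa
    _ = ∑ i ∈ X.erase j, A i (g i) := by rw [← add_sum_erase X _ hjX, hgj, hdiag, zero_add]
    _ ≤ subPer A (X.erase j) (Y.erase j) := le_subPer_of_bijOn hg

theorem subPer_erase [IsOrderedAddMonoid R] (hdiag : ∀ i, A i i = 0)
    (htrans : ∀ i t k, A i t + A t k ≤ A i k) (hjX : j ∈ X) (hjY : j ∈ Y) :
    subPer A (X.erase j) (Y.erase j) = subPer A X Y :=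
  (subPer_erase_le hdiag hjX hjY).antisymm (subPer_le_erase hdiag htrans hjX hjY)

theorem subPer_sdiff [IsOrderedAddMonoid R] (hdiag : ∀ i, A i i = 0)
    (htrans : ∀ i t k, A i t + A t k ≤ A i k) (X Y : Finset ι) :
    subPer A (X \ Y) (Y \ X) = subPer A X Y := by
  suffices ∀ S ⊆ X ∩ Y, subPer A (X \ S) (Y \ S) = subPer A X Y by
    simpa [sdiff_inter_self_left, inter_comm X Y] using this (X ∩ Y) subset_rfl
  intro S
  induction S using Finset.induction_on with
  | empty => simp
  | insert j S hjS ih =>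
    intro hS
    obtain ⟨hjXY, hSXY⟩ := insert_subset_iff.1 hS
    obtain ⟨hjX, hjY⟩ := mem_inter.1 hjXY
    rw [sdiff_insert, sdiff_insert, subPer_erase hdiag htrans (mem_sdiff.2 ⟨hjX, hjS⟩)
      (mem_sdiff.2 ⟨hjY, hjS⟩), ih hSXY]

end SubPer

theorem add_le_of_tropMul_self_eq {m : Type*} [Fintype m] {A : Matrix m m Rmax}
    (h : tropMul A A = A) (i t j : m) : A i t + A t j ≤ A i j :=
  calc A i t + A t j ≤ tropMul A A i j := le_sup (f := fun t => A i t + A t j) (mem_univ t)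
    _ = A i j := by rw [h]

/-- if `A` has zero diagonal and `A ⊙ A = A` (so `A = A*`), then
`A^{∧(n−k)}_{Jᶜ,Iᶜ} = A^{∧k}_{I,J}`. -/
theorem compound_compl_of_star {n : ℕ} (A : Matrix (Fin n) (Fin n) Rmax)
    (hdiag : ∀ i, A i i = 0) (hidem : tropMul A A = A)
    (k : ℕ)
    (I J : KSub n k) :
    compound (n - k) A
        ⟨J.1ᶜ, by simp [Finset.card_compl, J.2]⟩
        ⟨I.1ᶜ, by simp [Finset.card_compl, I.2]⟩
      = compound k A I J := by
  have htrans := add_le_of_tropMul_self_eq hidem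
  change subPer A J.1ᶜ I.1ᶜ = subPer A I.1 J.1
  rw [← subPer_sdiff hdiag htrans, compl_sdiff_compl, compl_sdiff_compl, subPer_sdiff hdiag htrans]
end
end

section
/- Over the max-plus semiring, let A be a definite n×n matrix over ℝ_max (per(A) = 0 and A_{i,i} = 0 for all i). Then: (i) every cycle of A has nonpositive weight, i.e. for every cycle (i_1, i_2, …, i_m, i_1) of distinct indices one has A_{i_1,i_2} + A_{i_2,i_3} + ⋯ + A_{i_m,i_1} ≤ 0; (ii) the tropical powers stabilize: A^{⊙k} = A^{⊙(n−1)} for every k ≥ n−1; and (iii) A^{⊙(n−1)} = adj(A) = A^∇ = (A^∇)^∇. -/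
open Matrix

noncomputable section

/-!
Since `per A = 0` and the diagonal vanishes, a simple cycle, completed by fixed points to a
permutation, has weight `≤ 0`. Erasing loops therefore bounds the weight of every walk from `i`
to `j` by that of a simple path from `i` to `j`, which has length `≤ n`; as `A^{⊙k} i j` is the
largest weight of a walk of length `k`, the powers stabilise at `k = n`. A simple path from `i`
to `j`, closed up by `j ↦ i`, is a permutation sending `j` to `i` whose weight off row `j` is that
of the path, so `A^{⊙n} ≤ adj A`. Conversely the weight of such a permutation off row `j` is that
of the path from `i` to `j` along its orbit plus that of closed walks, which are `≤ 0`. Finally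
`A^{⊙n}` is again definite and `(A^{⊙n})^{⊙n} = A^{⊙n²} = A^{⊙n}`, which gives `(A^∇)^∇ = A^∇`.
-/

open Finset

lemma Rmax.finsetSup_add {α : Type*} (s : Finset α) (f : α → Rmax) (c : Rmax) :
    s.sup f + c = s.sup fun x => f x + c :=
  apply_sup_eq_sup_comp (· + c) (fun x y => (max_add_add_right x y c).symm) (by simp)

lemma Rmax.add_finsetSup {α : Type*} (s : Finset α) (f : α → Rmax) (c : Rmax) :
    c + s.sup f = s.sup fun x => c + f x :=
  apply_sup_eq_sup_comp (c + ·) (fun x y => (max_add_add_left c x y).symm) (by simp)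

section TropicalAlgebra

lemma tropMul_apply {l m p : Type*} [Fintype m] (A : Matrix l m Rmax) (B : Matrix m p Rmax)
    (i : l) (j : p) : tropMul A B i j = univ.sup fun t => A i t + B t j := rfl

lemma tropMul_assoc {l m p q : Type*} [Fintype m] [Fintype p]
    (A : Matrix l m Rmax) (B : Matrix m p Rmax) (C : Matrix p q Rmax) :
    tropMul (tropMul A B) C = tropMul A (tropMul B C) := by
  ext i j
  simp only [tropMul_apply, Rmax.finsetSup_add, Rmax.add_finsetSup, add_assoc]
  exact Finset.sup_comm _ _ _

lemma tropMul_tropId {l m : Type*} [Fintype m] [DecidableEq m] (A : Matrix l m Rmax) :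
    tropMul A (tropId m) = A := by
  ext i j
  refine le_antisymm (Finset.sup_le fun t _ => ?_) (le_sup_of_le (mem_univ j) (by simp [tropId]))
  by_cases h : t = j <;> simp [tropId, h]

variable {ι : Type*} [Fintype ι] [DecidableEq ι] (A : Matrix ι ι Rmax)

lemma tropPow_add (a b : ℕ) : tropPow A (a + b) = tropMul (tropPow A a) (tropPow A b) := by
  induction b with
  | zero => exact (tropMul_tropId _).symm
  | succ b ih => rw [← add_assoc, tropPow, ih, tropMul_assoc, tropPow]

lemma tropPow_mul (a b : ℕ) : tropPow (tropPow A a) b = tropPow A (a * b) := by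
  induction b with
  | zero => rfl
  | succ b ih => rw [tropPow, ih, Nat.mul_succ, tropPow_add]

lemma tropPow_zero_apply_self (i : ι) : tropPow A 0 i i = 0 := by simp [tropPow, tropId]

lemma tropPow_add_le_tropPow_succ (k : ℕ) (i t j : ι) :
    tropPow A k i t + A t j ≤ tropPow A (k + 1) i j :=
  le_sup (f := fun t => tropPow A k i t + A t j) (mem_univ t)

variable {A} in
lemma tropPow_mono (hdiag : ∀ x, 0 ≤ A x x) {k l : ℕ} (h : k ≤ l) (i j : ι) :
    tropPow A k i j ≤ tropPow A l i j := by
  induction l, h using Nat.le_induction with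
  | base => exact le_rfl
  | succ l _ ih => exact ih.trans ((le_add_of_nonneg_right (hdiag j)).trans
      (tropPow_add_le_tropPow_succ A l i j j))

end TropicalAlgebra

section Walks

variable {ι : Type*} (A : Matrix ι ι Rmax)

-- A walk of length `m` is any `p : ℕ → ι`; only `p 0, …, p m` matter.
def walkWeight (p : ℕ → ι) (m : ℕ) : Rmax := ∑ t ∈ range m, A (p t) (p (t + 1))

@[simp] lemma walkWeight_zero (p : ℕ → ι) : walkWeight A p 0 = 0 := rfl

lemma walkWeight_succ (p : ℕ → ι) (m : ℕ) :
    walkWeight A p (m + 1) = walkWeight A p m + A (p m) (p (m + 1)) :=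
  sum_range_succ _ _

lemma walkWeight_add (p : ℕ → ι) (a b : ℕ) :
    walkWeight A p (a + b) = walkWeight A p a + walkWeight A (fun u => p (a + u)) b := by
  simp only [walkWeight, sum_range_add, add_assoc]

lemma walkWeight_congr {p q : ℕ → ι} {m : ℕ} (h : ∀ u ≤ m, p u = q u) :
    walkWeight A p m = walkWeight A q m :=
  sum_congr rfl fun u hu => by
    rw [h u (mem_range.1 hu).le, h (u + 1) (mem_range.1 hu)]

lemma walkWeight_eq_shortcut_add_loop {p : ℕ → ι} {s t m : ℕ} (hst : s ≤ t) (htm : t ≤ m)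
    (hp : p s = p t) :
    walkWeight A p m =
      walkWeight A (fun u => if u ≤ s then p u else p (u + (t - s))) (m - (t - s))
        + walkWeight A (fun u => p (s + u)) (t - s) := by
  obtain ⟨d, rfl⟩ := Nat.exists_eq_add_of_le hst
  obtain ⟨r, rfl⟩ := Nat.exists_eq_add_of_le htm
  rw [show s + d + r - (s + d - s) = s + r by omega, Nat.add_sub_cancel_left,
    walkWeight_add A p (s + d) r, walkWeight_add A p s d, walkWeight_add _ _ s r, add_right_comm]
  congr 2
  · exact walkWeight_congr A fun u hu => (if_pos hu).symm
  · congr 1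
    funext u
    rcases u with _ | u
    · simp [hp]
    · simp only [show ¬ s + (u + 1) ≤ s by omega, if_false]
      congr 1
      omega

variable [Fintype ι] [DecidableEq ι]

lemma walkWeight_le_tropPow (p : ℕ → ι) (m : ℕ) :
    walkWeight A p m ≤ tropPow A m (p 0) (p m) := by
  induction m with
  | zero => simp [tropPow_zero_apply_self]
  | succ m ih =>
    rw [walkWeight_succ]
    exact (add_le_add ih le_rfl).trans (tropPow_add_le_tropPow_succ A m _ _ _)

-- The summand `a` lets the induction absorb the last edge of the walk.
lemma tropPow_add_le_of_forall_walkWeight {k : ℕ} {i j : ι} {a c : Rmax}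
    (h : ∀ p : ℕ → ι, p 0 = i → p k = j → walkWeight A p k + a ≤ c) :
    tropPow A k i j + a ≤ c := by
  induction k generalizing j a with
  | zero =>
    by_cases hij : i = j
    · subst hij
      simpa [tropPow_zero_apply_self] using h (fun _ => i) rfl rfl
    · simp [tropPow, tropId, hij]
  | succ k ih =>
    rw [tropPow, tropMul_apply, Rmax.finsetSup_add]
    refine Finset.sup_le fun t _ => ?_
    rw [add_assoc]
    refine ih fun p hp0 hpk => ?_
    let q : ℕ → ι := fun u => if u ≤ k then p u else j
    have hq : walkWeight A q (k + 1) = walkWeight A p k + A t j := by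
      rw [walkWeight_succ, walkWeight_congr A fun u hu => if_pos hu]
      simp [q, hpk]
    rw [← add_assoc, ← hq]
    exact h q (by simp [q, hp0]) (by simp [q])

lemma tropPow_le_of_forall_walkWeight {k : ℕ} {i j : ι} {c : Rmax}
    (h : ∀ p : ℕ → ι, p 0 = i → p k = j → walkWeight A p k ≤ c) : tropPow A k i j ≤ c := by
  simpa using tropPow_add_le_of_forall_walkWeight A (a := 0) (by simpa using h)

end Walks

lemma exists_lt_eq_of_not_injOn {ι : Type*} {p : ℕ → ι} {m : ℕ}
    (h : ¬ Set.InjOn p (Set.Iic m)) :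
    ∃ s t, s < t ∧ t ≤ m ∧ p s = p t ∧ Set.InjOn p (Set.Iio t) := by
  have hex : ∃ t, t ≤ m ∧ ∃ s < t, p s = p t := by
    simp only [Set.InjOn, Set.mem_Iic, not_forall] at h
    obtain ⟨a, ha, b, hb, hab, hne⟩ := h
    rcases lt_or_gt_of_ne hne with hlt | hlt
    · exact ⟨b, hb, a, hlt, hab⟩
    · exact ⟨a, ha, b, hlt, hab.symm⟩
  classical
  obtain ⟨htm, s, hst, hs⟩ := Nat.find_spec hex
  refine ⟨s, Nat.find hex, hst, htm, hs, fun a ha b hb hab => ?_⟩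
  by_contra hne
  rcases lt_or_gt_of_ne hne with hlt | hlt
  · exact Nat.find_min hex hb ⟨(hb.trans_le htm).le, a, hlt, hab⟩
  · exact Nat.find_min hex ha ⟨(ha.trans_le htm).le, b, hlt, hab.symm⟩

lemma exists_perm_of_injOn {ι : Type*} [DecidableEq ι] {q : ℕ → ι} {ℓ : ℕ}
    (hq : Set.InjOn q (Set.Iic ℓ)) :
    ∃ π : Equiv.Perm ι, π (q ℓ) = q 0 ∧ (∀ u < ℓ, π (q u) = q (u + 1)) ∧
      ∀ x, (∀ u ≤ ℓ, q u ≠ x) → π x = x := by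
  let e : Fin (ℓ + 1) ↪ ι :=
    ⟨fun u => q u, fun a b h => Fin.ext (hq (Nat.lt_succ_iff.1 a.2) (Nat.lt_succ_iff.1 b.2) h)⟩
  have he (u : Fin (ℓ + 1)) := (finRotate (ℓ + 1)).viaFintypeEmbedding_apply_image e u
  refine ⟨(finRotate (ℓ + 1)).viaFintypeEmbedding e, ?_, fun u hu => ?_, fun x hx => ?_⟩
  · exact (he (Fin.last ℓ)).trans (congrArg e finRotate_last)
  · exact (he ⟨u, by omega⟩).trans (congrArg e (finRotate_of_lt hu))
  · refine Equiv.Perm.viaFintypeEmbedding_apply_notMem_range _ _ ?_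
    rintro ⟨u, rfl⟩
    exact hx u (Nat.lt_succ_iff.1 u.2) rfl

section Cycles

variable {ι : Type*} [Fintype ι] [DecidableEq ι] {A : Matrix ι ι Rmax}

lemma sum_perm_le_tropPer (A : Matrix ι ι Rmax) (σ : Equiv.Perm ι) :
    ∑ x, A x (σ x) ≤ tropPer A :=
  le_sup (f := fun σ : Equiv.Perm ι => ∑ x, A x (σ x)) (mem_univ σ)

lemma tropPer_eq_zero_of_nonpos (hper : tropPer A ≤ 0) (hdiag : ∀ x, A x x = 0) :
    tropPer A = 0 :=
  le_antisymm hper (by simpa [hdiag] using sum_perm_le_tropPer A 1)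

lemma exists_perm_sum_compl_eq_walkWeight (hdiag : ∀ x, A x x = 0) {q : ℕ → ι} {ℓ : ℕ}
    (hq : Set.InjOn q (Set.Iic ℓ)) :
    ∃ π : Equiv.Perm ι, π (q ℓ) = q 0 ∧ ∑ x ∈ {q ℓ}ᶜ, A x (π x) = walkWeight A q ℓ := by
  obtain ⟨π, hπℓ, hπ, hfix⟩ := exists_perm_of_injOn hq
  have hinj : Set.InjOn q (range ℓ) := hq.mono fun u hu => (mem_range.1 (mem_coe.1 hu)).le
  have hsub : (range ℓ).image q ⊆ {q ℓ}ᶜ := by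
    simp only [subset_iff, mem_image, mem_range, mem_compl, mem_singleton]
    rintro _ ⟨u, hu, rfl⟩ h
    exact hu.ne (hq hu.le (Set.mem_Iic.2 le_rfl) h)
  refine ⟨π, hπℓ, ?_⟩
  rw [← sum_subset hsub, sum_image hinj]
  · exact sum_congr rfl fun u hu => by rw [hπ u (mem_range.1 hu)]
  · intro x hxℓ hx
    rw [hfix x fun u hu hux => ?_, hdiag]
    rcases hu.lt_or_eq with hu | rfl
    · exact hx (mem_image.2 ⟨u, mem_range.2 hu, hux⟩)
    · exact mem_compl.1 hxℓ (mem_singleton.2 hux.symm)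

lemma walkWeight_nonpos_of_injOn (hper : tropPer A ≤ 0) (hdiag : ∀ x, A x x = 0)
    {q : ℕ → ι} {ℓ : ℕ} (hq : Set.InjOn q (Set.Iic ℓ)) (hclosed : q (ℓ + 1) = q 0) :
    walkWeight A q (ℓ + 1) ≤ 0 := by
  obtain ⟨π, hπℓ, hsum⟩ := exists_perm_sum_compl_eq_walkWeight hdiag hq
  calc walkWeight A q (ℓ + 1) = A (q ℓ) (π (q ℓ)) + ∑ x ∈ {q ℓ}ᶜ, A x (π x) := by
        rw [walkWeight_succ, hsum, hπℓ, hclosed, add_comm]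
    _ = ∑ x, A x (π x) := (Fintype.sum_eq_add_sum_compl (q ℓ) fun x => A x (π x)).symm
    _ ≤ 0 := (sum_perm_le_tropPer A π).trans hper

open Fin.NatCast in
lemma sum_cycle_nonpos (hper : tropPer A ≤ 0) (hdiag : ∀ x, A x x = 0) {m : ℕ}
    {c : Fin (m + 1) → ι} (hc : Function.Injective c) : ∑ t, A (c t) (c (t + 1)) ≤ 0 := by
  have hq : Set.InjOn (fun u : ℕ => c (u : Fin (m + 1))) (Set.Iic m) := fun a ha b hb h => by
    simpa [Fin.ext_iff, Nat.mod_eq_of_lt (Nat.lt_succ_of_le ha),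
      Nat.mod_eq_of_lt (Nat.lt_succ_of_le hb)] using hc h
  convert walkWeight_nonpos_of_injOn hper hdiag hq (by simp) using 1
  rw [walkWeight, ← Fin.sum_univ_eq_sum_range]
  simp

-- Loop erasure: the first repetition `p s = p t` closes a simple cycle, of weight `≤ 0`.
lemma exists_injOn_walkWeight_le (hper : tropPer A ≤ 0) (hdiag : ∀ x, A x x = 0)
    (p : ℕ → ι) (m : ℕ) :
    ∃ ℓ ≤ m, ∃ q : ℕ → ι, q 0 = p 0 ∧ q ℓ = p m ∧ Set.InjOn q (Set.Iic ℓ) ∧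
      walkWeight A p m ≤ walkWeight A q ℓ := by
  induction m using Nat.strong_induction_on generalizing p with
  | _ m ih =>
  by_cases hp : Set.InjOn p (Set.Iic m)
  · exact ⟨m, le_rfl, p, rfl, rfl, hp, le_rfl⟩
  obtain ⟨s, t, hst, htm, hpst, hinj⟩ := exists_lt_eq_of_not_injOn hp
  obtain ⟨d, hd⟩ : ∃ d, t - s = d + 1 := ⟨t - s - 1, by omega⟩
  have hloop : walkWeight A (fun u => p (s + u)) (t - s) ≤ 0 := by
    rw [hd]
    refine walkWeight_nonpos_of_injOn hper hdiag (fun a ha b hb hab => ?_) ?_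
    · have ha' := Set.mem_Iic.1 ha
      have hb' := Set.mem_Iic.1 hb
      have := hinj (show s + a < t by omega) (show s + b < t by omega) hab
      omega
    · simp only [add_zero, ← hd, Nat.add_sub_cancel' hst.le, hpst]
  obtain ⟨ℓ, hℓ, q, hq0, hqℓ, hq, hle⟩ :=
    ih (m - (t - s)) (by omega) (fun u => if u ≤ s then p u else p (u + (t - s)))
  refine ⟨ℓ, by omega, q, by simpa using hq0, ?_, hq, ?_⟩
  · rw [hqℓ]
    split_ifs with h
    · rw [show m - (t - s) = s by omega, hpst, show t = m by omega]
    · rw [Nat.sub_add_cancel (by omega)]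
  · rw [walkWeight_eq_shortcut_add_loop A hst.le htm hpst]
    simpa using add_le_add hle hloop

end Cycles

section Stabilization

variable {ι : Type*} [Fintype ι] [DecidableEq ι] {A : Matrix ι ι Rmax}

lemma tropPow_le_tropPow_of_card_le (hper : tropPer A ≤ 0) (hdiag : ∀ x, A x x = 0) {N : ℕ}
    (hN : Fintype.card ι ≤ N + 1) (k : ℕ) (i j : ι) : tropPow A k i j ≤ tropPow A N i j := by
  refine tropPow_le_of_forall_walkWeight A fun p hp0 hpk => ?_
  obtain ⟨ℓ, -, q, hq0, hqℓ, hq, hle⟩ := exists_injOn_walkWeight_le hper hdiag p k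
  have hq' : Set.InjOn q (range (ℓ + 1)) :=
    hq.mono fun u hu => Nat.lt_succ_iff.1 (mem_range.1 (mem_coe.1 hu))
  have hℓ : ℓ + 1 ≤ Fintype.card ι := by
    simpa using card_le_card_of_injOn q (fun u _ => mem_univ (q u)) hq'
  calc walkWeight A p k ≤ walkWeight A q ℓ := hle
    _ ≤ tropPow A ℓ (q 0) (q ℓ) := walkWeight_le_tropPow A q ℓ
    _ ≤ tropPow A N i j := by
      rw [hq0, hqℓ, hp0, hpk]
      exact tropPow_mono (fun x => (hdiag x).ge) (by omega) i j

lemma tropPow_eq_of_card_le (hper : tropPer A ≤ 0) (hdiag : ∀ x, A x x = 0) {N k : ℕ}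
    (hN : Fintype.card ι ≤ N + 1) (hk : N ≤ k) : tropPow A k = tropPow A N := by
  ext i j
  exact le_antisymm (tropPow_le_tropPow_of_card_le hper hdiag hN k i j)
    (tropPow_mono (fun x => (hdiag x).ge) hk i j)

lemma tropPow_apply_self_nonpos (hper : tropPer A ≤ 0) (hdiag : ∀ x, A x x = 0) (k : ℕ)
    (i : ι) : tropPow A k i i ≤ 0 := by
  refine tropPow_le_of_forall_walkWeight A fun p hp0 hpk => ?_
  obtain ⟨ℓ, -, q, hq0, hqℓ, hq, hle⟩ := exists_injOn_walkWeight_le hper hdiag p k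
  obtain rfl : 0 = ℓ :=
    hq (Set.mem_Iic.2 ℓ.zero_le) (Set.mem_Iic.2 le_rfl) (by rw [hq0, hqℓ, hp0, hpk])
  simpa using hle

lemma tropPow_apply_self (hper : tropPer A ≤ 0) (hdiag : ∀ x, A x x = 0) (k : ℕ) (i : ι) :
    tropPow A k i i = 0 :=
  le_antisymm (tropPow_apply_self_nonpos hper hdiag k i)
    ((tropPow_zero_apply_self A i).ge.trans
      (tropPow_mono (fun x => (hdiag x).ge) k.zero_le i i))

end Stabilization

section InvariantSets

variable {ι : Type*} [Fintype ι] [DecidableEq ι] {A : Matrix ι ι Rmax}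

lemma sum_nonpos_of_forall_sum_erase_le (hA : ∀ k x, tropPow A k x x ≤ 0)
    {π : Equiv.Perm ι} {S : Finset ι}
    (hS : ∀ j ∈ S, ∑ x ∈ S.erase j, A x (π x) ≤ tropPow A (#S - 1) (π j) j) :
    ∑ x ∈ S, A x (π x) ≤ 0 := by
  rcases S.eq_empty_or_nonempty with rfl | ⟨j, hj⟩
  · simp
  calc ∑ x ∈ S, A x (π x) = ∑ x ∈ S.erase j, A x (π x) + A j (π j) :=
        (sum_erase_add _ _ hj).symm
    _ ≤ tropPow A (#S - 1) (π j) j + A j (π j) := add_le_add (hS j hj) le_rfl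
    _ ≤ tropPow A (#S - 1 + 1) (π j) (π j) := tropPow_add_le_tropPow_succ A _ _ _ _
    _ ≤ 0 := hA _ _

-- If `π` moves `j`, let `j' = π⁻¹ j`: `π * swap j j'` fixes `j` and sends `j'` to `π j`, so on
-- `S.erase j` it yields a path from `π j` to `j'`, which the edge `j' → j` extends.
lemma sum_erase_le_tropPow (hA : ∀ k x, tropPow A k x x ≤ 0) (hdiag : ∀ x, 0 ≤ A x x)
    (S : Finset ι) (π : Equiv.Perm ι) (hS : ∀ x, π x ∈ S ↔ x ∈ S) {j : ι} (hj : j ∈ S) :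
    ∑ x ∈ S.erase j, A x (π x) ≤ tropPow A (#S - 1) (π j) j := by
  induction S using Finset.strongInduction generalizing π j with
  | H S ih =>
  by_cases hfix : π j = j
  · have hS' : ∀ x, π x ∈ S.erase j ↔ x ∈ S.erase j := fun x => by
      rw [mem_erase, mem_erase, hS, ← hfix, π.injective.ne_iff, hfix]
    calc ∑ x ∈ S.erase j, A x (π x) ≤ 0 :=
          sum_nonpos_of_forall_sum_erase_le hA fun j' hj' => ih _ (erase_ssubset hj) π hS' hj'
      _ = tropPow A 0 j j := (tropPow_zero_apply_self A j).symm
      _ ≤ tropPow A (#S - 1) (π j) j := by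
          rw [hfix]
          exact tropPow_mono hdiag (Nat.zero_le _) j j
  set j' := π.symm j
  have hπj' : π j' = j := π.apply_symm_apply j
  have hj'S : j' ∈ S := (hS j').1 (hπj' ▸ hj)
  have hj'j : j' ≠ j := fun h => hfix (by rw [← h, hπj', h])
  have hj'S' : j' ∈ S.erase j := mem_erase.2 ⟨hj'j, hj'S⟩
  set π' := π * Equiv.swap j j'
  have hS' : ∀ x, π' x ∈ S.erase j ↔ x ∈ S.erase j := fun x => by
    have hSx := hS x
    have hSj := hS j
    have hπx : π x = j ↔ x = j' := by rw [← hπj', π.injective.eq_iff]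
    simp only [mem_erase, π', Equiv.Perm.mul_apply, Equiv.swap_apply_def]
    split_ifs <;> grind
  have hsum : ∑ x ∈ (S.erase j).erase j', A x (π' x) = ∑ x ∈ (S.erase j).erase j', A x (π x) :=
    sum_congr rfl fun x hx => by
      rw [mem_erase, mem_erase] at hx
      rw [Equiv.Perm.mul_apply, Equiv.swap_apply_of_ne_of_ne hx.2.1 hx.1]
  have hcard : #S - 1 = #(S.erase j) - 1 + 1 := by
    have := one_lt_card.2 ⟨j, hj, j', hj'S, hj'j.symm⟩
    rw [card_erase_of_mem hj]
    omega
  calc ∑ x ∈ S.erase j, A x (π x) = ∑ x ∈ (S.erase j).erase j', A x (π x) + A j' j := by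
        rw [← sum_erase_add _ _ hj'S', hπj']
    _ ≤ tropPow A (#(S.erase j) - 1) (π j) j' + A j' j := by
        have key := ih _ (erase_ssubset hj) π' hS' hj'S'
        rw [hsum, show π' j' = π j by simp [π']] at key
        exact add_le_add key le_rfl
    _ ≤ tropPow A (#S - 1) (π j) j := hcard ▸ tropPow_add_le_tropPow_succ A _ _ _ _

lemma tropPer_nonpos_of_tropPow_apply_self_nonpos (hA : ∀ k x, tropPow A k x x ≤ 0)
    (hdiag : ∀ x, 0 ≤ A x x) : tropPer A ≤ 0 :=
  Finset.sup_le fun π _ => by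
    simpa using sum_nonpos_of_forall_sum_erase_le hA fun j _ =>
      sum_erase_le_tropPow hA hdiag univ π (by simp) (mem_univ j)

lemma tropPer_tropPow (hper : tropPer A ≤ 0) (hdiag : ∀ x, A x x = 0) (N : ℕ) :
    tropPer (tropPow A N) = 0 := by
  have hA : ∀ k x, tropPow (tropPow A N) k x x ≤ 0 := fun k x => by
    rw [tropPow_mul]
    exact tropPow_apply_self_nonpos hper hdiag _ x
  refine tropPer_eq_zero_of_nonpos ?_ (tropPow_apply_self hper hdiag N)
  exact tropPer_nonpos_of_tropPow_apply_self_nonpos hA fun x =>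
    (tropPow_apply_self hper hdiag N x).ge

end InvariantSets

def Equiv.Perm.ofSuccAbove {n : ℕ} (i j : Fin (n + 1)) (τ : Equiv.Perm (Fin n)) :
    Equiv.Perm (Fin (n + 1)) :=
  (finSuccEquiv' j).trans ((Equiv.optionCongr τ).trans (finSuccEquiv' i).symm)

section Adjoint

variable {n : ℕ}

lemma Equiv.Perm.ofSuccAbove_apply_self (i j : Fin (n + 1)) (τ : Equiv.Perm (Fin n)) :
    Equiv.Perm.ofSuccAbove i j τ j = i := by
  simp [Equiv.Perm.ofSuccAbove]

lemma Equiv.Perm.ofSuccAbove_apply_succAbove (i j : Fin (n + 1)) (τ : Equiv.Perm (Fin n))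
    (a : Fin n) : Equiv.Perm.ofSuccAbove i j τ (j.succAbove a) = i.succAbove (τ a) := by
  simp [Equiv.Perm.ofSuccAbove]

lemma Equiv.Perm.image_ofSuccAbove (i j : Fin (n + 1)) :
    univ.image (Equiv.Perm.ofSuccAbove i j) = univ.filter fun π => π j = i := by
  ext π
  simp only [mem_image, mem_univ, true_and, mem_filter]
  refine ⟨fun ⟨τ, hτ⟩ => hτ ▸ Equiv.Perm.ofSuccAbove_apply_self i j τ, fun hπ => ?_⟩
  let E := ((finSuccEquiv' j).symm.trans π).trans (finSuccEquiv' i)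
  have hE : E none = none := by simp [E, hπ]
  have hτ : E.removeNone.optionCongr = E := by
    rw [map_equiv_removeNone, hE, Equiv.swap_self]
    exact one_mul E
  refine ⟨E.removeNone, Equiv.ext fun x => ?_⟩
  simp [Equiv.Perm.ofSuccAbove, hτ, E]

lemma tropAdj_apply_eq_sup (A : Matrix (Fin (n + 1)) (Fin (n + 1)) Rmax) (i j : Fin (n + 1)) :
    tropAdj A i j = (univ.filter fun π : Equiv.Perm (Fin (n + 1)) => π j = i).sup
      fun π => ∑ x ∈ {j}ᶜ, A x (π x) := by
  rw [← Equiv.Perm.image_ofSuccAbove, sup_image]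
  refine sup_congr rfl fun τ _ => ?_
  rw [Function.comp_apply, ← Fin.image_succAbove_univ,
    sum_image Fin.succAbove_right_injective.injOn]
  simp [Equiv.Perm.ofSuccAbove_apply_succAbove]

variable {A : Matrix (Fin (n + 1)) (Fin (n + 1)) Rmax}

lemma sum_compl_le_tropAdj {i j : Fin (n + 1)} {π : Equiv.Perm (Fin (n + 1))} (hπ : π j = i) :
    ∑ x ∈ {j}ᶜ, A x (π x) ≤ tropAdj A i j := by
  rw [tropAdj_apply_eq_sup]
  exact le_sup (f := fun π : Equiv.Perm (Fin (n + 1)) => ∑ x ∈ {j}ᶜ, A x (π x))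
    (mem_filter.2 ⟨mem_univ π, hπ⟩)

lemma tropAdj_le_tropPow (hA : ∀ k x, tropPow A k x x ≤ 0) (hdiag : ∀ x, 0 ≤ A x x)
    (i j : Fin (n + 1)) : tropAdj A i j ≤ tropPow A n i j := by
  rw [tropAdj_apply_eq_sup]
  refine Finset.sup_le fun π hπ => ?_
  rw [← (mem_filter.1 hπ).2, compl_singleton]
  simpa using sum_erase_le_tropPow hA hdiag univ π (by simp) (mem_univ j)

lemma tropPow_le_tropAdj (hper : tropPer A ≤ 0) (hdiag : ∀ x, A x x = 0) (i j : Fin (n + 1)) :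
    tropPow A n i j ≤ tropAdj A i j := by
  refine tropPow_le_of_forall_walkWeight A fun p hp0 hpn => ?_
  obtain ⟨ℓ, -, q, hq0, hqℓ, hq, hle⟩ := exists_injOn_walkWeight_le hper hdiag p n
  obtain ⟨π, hπ, hsum⟩ := exists_perm_sum_compl_eq_walkWeight hdiag hq
  rw [hqℓ, hpn, hq0, hp0] at hπ
  rw [hqℓ, hpn] at hsum
  exact hle.trans (hsum ▸ sum_compl_le_tropAdj hπ)

lemma tropPow_eq_tropAdj (hper : tropPer A ≤ 0) (hdiag : ∀ x, A x x = 0) :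
    tropPow A n = tropAdj A := by
  ext i j
  exact le_antisymm (tropPow_le_tropAdj hper hdiag i j) (tropAdj_le_tropPow
    (tropPow_apply_self_nonpos hper hdiag) (fun x => (hdiag x).ge) i j)

lemma tropAdj_eq_tropQInv (hper : tropPer A = 0) : tropAdj A = tropQInv A := by
  ext i j
  simp [tropQInv, hper]

end Adjoint

-- The matrix has size `n+1`, so `n` plays the role of the paper's `n−1`.
/-- for a definite matrix `A` (`per(A) = 0` and zero diagonal):
(i) every cycle has nonpositive weight; (ii) tropical powers stabilize from
exponent `n−1` on; (iii) `A^{⊙(n−1)} = adj(A) = A^∇ = (A^∇)^∇`.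
(The matrix here has size `n+1`, so `n` plays the role of `n−1`.) -/
theorem definite_powers_adj {n : ℕ} (A : Matrix (Fin (n+1)) (Fin (n+1)) Rmax)
    (hper : tropPer A = 0) (hdiag : ∀ i, A i i = 0) :
    (∀ (m : ℕ) (c : Fin (m+1) → Fin (n+1)), Function.Injective c →
        ∑ t, A (c t) (c (t + 1)) ≤ 0) ∧
    (∀ k, n ≤ k → tropPow A k = tropPow A n) ∧
    tropPow A n = tropAdj A ∧
    tropAdj A = tropQInv A ∧
    tropQInv A = tropQInv (tropQInv A) := by
  have hcard : Fintype.card (Fin (n + 1)) ≤ n + 1 := (Fintype.card_fin _).le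
  have hpow : tropPow A n = tropAdj A := tropPow_eq_tropAdj hper.le hdiag
  have hqinv : tropQInv A = tropPow A n := by rw [← tropAdj_eq_tropQInv hper, hpow]
  have hBper := tropPer_tropPow hper.le hdiag n
  have hBdiag := tropPow_apply_self hper.le hdiag n
  refine ⟨fun m c hc => sum_cycle_nonpos hper.le hdiag hc,
    fun k hk => tropPow_eq_of_card_le hper.le hdiag hcard hk, hpow, tropAdj_eq_tropQInv hper, ?_⟩
  rw [hqinv, ← tropAdj_eq_tropQInv hBper, ← tropPow_eq_tropAdj hBper.le hBdiag, tropPow_mul,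
    tropPow_eq_of_card_le hper.le hdiag hcard (Nat.le_mul_self n)]
end
end

section
/- Over the max-plus semiring, for every n×n matrix A over ℝ_max, every m ≥ 1, and every k with 1 ≤ k ≤ n, the compound of the power dominates the power of the compound: (A^{⊙m})^{∧k} ≥ (A^{∧k})^{⊙m} entrywise. -/
open Matrix

noncomputable section

/-! The compound is lax-multiplicative, `A^{∧k} ⊙ B^{∧k} ≤ (A ⊙ B)^{∧k}`,
because composing a bijection `I → K` with a bijection `K → J` gives a bijection `I → J`
and each composite entry `A i (σ i) + B (σ i) (τ (σ i))` is one of the terms of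
`(A ⊙ B) i (τ (σ i))`. It also dominates the identity, so induction on `m` gives the claim. -/

lemma tropMul_mono_left {l m p : Type*} [Fintype m] {A A' : Matrix l m Rmax}
    (B : Matrix m p Rmax) (h : ∀ i j, A i j ≤ A' i j) (i : l) (j : p) :
    tropMul A B i j ≤ tropMul A' B i j :=
  Finset.sup_mono_fun fun t _ => add_le_add_left (h i t) _

lemma le_tropMul {l m p : Type*} [Fintype m] (A : Matrix l m Rmax) (B : Matrix m p Rmax)
    (i : l) (t : m) (j : p) : A i t + B t j ≤ tropMul A B i j :=
  Finset.le_sup (f := fun t => A i t + B t j) (Finset.mem_univ t)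

lemma tropMul_le {l m p : Type*} [Fintype m] {A : Matrix l m Rmax} {B : Matrix m p Rmax}
    {i : l} {j : p} {c : Rmax} (h : ∀ t, A i t + B t j ≤ c) : tropMul A B i j ≤ c :=
  Finset.sup_le fun t _ => h t

namespace KSub

variable {n k : ℕ}

lemma nonempty_equiv (I J : KSub n k) : Nonempty ({x // x ∈ I.1} ≃ {x // x ∈ J.1}) :=
  ⟨Fintype.equivOfCardEq (by simp only [Fintype.card_coe, I.2, J.2])⟩

end KSub

section Compound

variable {n k : ℕ}

lemma sum_le_compound (A : Matrix (Fin n) (Fin n) Rmax) {I J : KSub n k}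
    (σ : {x // x ∈ I.1} ≃ {x // x ∈ J.1}) :
    ∑ i, A i.1 (σ i).1 ≤ compound k A I J :=
  Finset.le_sup (f := fun σ : {x // x ∈ I.1} ≃ {x // x ∈ J.1} => ∑ i, A i.1 (σ i).1)
    (Finset.mem_univ σ)

lemma exists_compound_eq_sum (A : Matrix (Fin n) (Fin n) Rmax) (I J : KSub n k) :
    ∃ σ : {x // x ∈ I.1} ≃ {x // x ∈ J.1}, compound k A I J = ∑ i, A i.1 (σ i).1 := by
  have := I.nonempty_equiv J
  obtain ⟨σ, -, hσ⟩ := Finset.exists_mem_eq_sup Finset.univ Finset.univ_nonempty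
    (fun σ : {x // x ∈ I.1} ≃ {x // x ∈ J.1} => ∑ i, A i.1 (σ i).1)
  exact ⟨σ, hσ⟩

lemma tropMul_compound_le_compound_tropMul (A B : Matrix (Fin n) (Fin n) Rmax)
    (I J : KSub n k) :
    tropMul (compound k A) (compound k B) I J ≤ compound k (tropMul A B) I J := by
  refine tropMul_le fun K => ?_
  obtain ⟨σ, hσ⟩ := exists_compound_eq_sum A I K
  obtain ⟨τ, hτ⟩ := exists_compound_eq_sum B K J
  calc compound k A I K + compound k B K J
      = ∑ i, (A i.1 (σ i).1 + B (σ i).1 (τ (σ i)).1) := by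
        rw [hσ, hτ, ← Equiv.sum_comp σ, Finset.sum_add_distrib]
    _ ≤ ∑ i, tropMul A B i.1 (τ (σ i)).1 :=
        Finset.sum_le_sum fun i _ => le_tropMul A B _ _ _
    _ ≤ compound k (tropMul A B) I J := sum_le_compound _ (σ.trans τ)

lemma tropId_le_compound_tropId (I J : KSub n k) :
    tropId (KSub n k) I J ≤ compound k (tropId (Fin n)) I J := by
  by_cases h : I = J
  · subst h
    calc tropId (KSub n k) I I = ∑ i : {x // x ∈ I.1}, tropId (Fin n) i.1 i.1 := by
          simp [tropId]
      _ ≤ compound k (tropId (Fin n)) I I := sum_le_compound _ (Equiv.refl _)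
  · simp only [tropId, of_apply, if_neg h, bot_le]

end Compound

theorem compound_pow_ge_general {n : ℕ} (A : Matrix (Fin n) (Fin n) Rmax)
    (m : ℕ) (k : ℕ) (I J : KSub n k) :
    tropPow (compound k A) m I J ≤ compound k (tropPow A m) I J := by
  induction m generalizing I J with
  | zero => exact tropId_le_compound_tropId I J
  | succ m ih =>
    calc tropPow (compound k A) (m + 1) I J
        = tropMul (tropPow (compound k A) m) (compound k A) I J := rfl
      _ ≤ tropMul (compound k (tropPow A m)) (compound k A) I J :=
          tropMul_mono_left _ ih I J
      _ ≤ compound k (tropPow A (m + 1)) I J :=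
          tropMul_compound_le_compound_tropMul _ _ I J

/-- `(A^{⊙m})^{∧k} ≥ (A^{∧k})^{⊙m}` entrywise. -/
theorem compound_pow_ge {n : ℕ} (A : Matrix (Fin n) (Fin n) Rmax)
    (m : ℕ) (hm : 1 ≤ m) (k : ℕ) (hk1 : 1 ≤ k) (hk2 : k ≤ n)
    (I J : KSub n k) :
    tropPow (compound k A) m I J ≤ compound k (tropPow A m) I J :=
  compound_pow_ge_general A m k I J
end
end

section
/- Over the max-plus semiring, if A is a nonsingular n×n matrix over ℝ_max (per(A) > −∞), then per(adj(A)) = (n−1)·per(A), per(A ⊙ adj(A)) = n·per(A), and per(A^∇) = −per(A), where all products and multiples are taken in the usual arithmetic of ℝ (tropical powers). -/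
open Matrix

noncomputable section

/-! Fix a permutation `σ` attaining `per A`. Laplace expansion along row `j` restricted to `σ`
gives `per A ≤ A j (σ j) + adj(A) (σ j) j`; summing over `j` yields the lower bounds
`(n + 1) • per A ≤ per A + per (adj A)` and `(n + 1) • per A ≤ per (A ⊙ adj A)`.
Conversely, the entries of `A` used by any term of `per (adj A)` (resp. `per (A ⊙ adj A)`) cover
every row and every column exactly `n` (resp. `n + 1`) times; by Hall's theorem such a multiset of
entries splits into that many permutations, each contributing at most `per A`. Finally `A^∇` is
`adj A` shifted entrywise by `-p`, so its permanent is `n p - (n + 1) p`. -/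

open Finset

section Weights

variable {m : Type*} [Fintype m]

def HasLineSums (w : Matrix m m ℕ) (row col : m → ℕ) : Prop :=
  (∀ r, ∑ c, w r c = row r) ∧ ∀ c, ∑ r, w r c = col c

lemma HasLineSums.sum {ι : Type*} {s : Finset ι} {w : ι → Matrix m m ℕ}
    {row col : ι → m → ℕ}
    (h : ∀ i ∈ s, HasLineSums (w i) (row i) (col i)) :
    HasLineSums (∑ i ∈ s, w i) (∑ i ∈ s, row i) (∑ i ∈ s, col i) := by
  constructor <;> intro x <;> simp only [Matrix.sum_apply, Finset.sum_apply] <;> rw [sum_comm]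
  exacts [sum_congr rfl fun i hi => (h i hi).1 x, sum_congr rfl fun i hi => (h i hi).2 x]

lemma HasLineSums.add {w₁ w₂ : Matrix m m ℕ} {row₁ col₁ row₂ col₂ : m → ℕ}
    (h₁ : HasLineSums w₁ row₁ col₁) (h₂ : HasLineSums w₂ row₂ col₂) :
    HasLineSums (w₁ + w₂) (row₁ + row₂) (col₁ + col₂) := by
  constructor <;> intro x <;> simp [sum_add_distrib, h₁.1, h₁.2, h₂.1, h₂.2]

variable [DecidableEq m]

lemma hasLineSums_single (a b : m) :
    HasLineSums (Matrix.single a b 1) (fun r => if a = r then 1 else 0)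
      (fun c => if b = c then 1 else 0) := by
  constructor <;> intro x <;> simp [Matrix.single_apply, ite_and]

lemma hasLineSums_sum_single_perm (σ : Equiv.Perm m) :
    HasLineSums (∑ r, Matrix.single r (σ r) 1) 1 1 := by
  convert HasLineSums.sum fun r _ => hasLineSums_single r (σ r) using 1 <;> funext x
  · simp
  · simp [← σ.eq_symm_apply]

/-- Hall's marriage theorem, applied to the `k`-regular bipartite multigraph of positive entries. -/
lemma HasLineSums.exists_perm_forall_pos {w : Matrix m m ℕ} {k : ℕ} (hk : 0 < k)
    (hw : HasLineSums w (fun _ => k) (fun _ => k)) :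
    ∃ σ : Equiv.Perm m, ∀ r, 0 < w r (σ r) := by
  set N : m → Finset m := fun r => univ.filter fun c => 0 < w r c
  have hall : ∀ S : Finset m, #S ≤ #(S.biUnion N) := by
    intro S
    refine Nat.le_of_mul_le_mul_left ?_ hk
    calc k * #S = ∑ r ∈ S, ∑ c, w r c := by simp [hw.1, mul_comm]
      _ = ∑ r ∈ S, ∑ c ∈ S.biUnion N, w r c := by
          refine sum_congr rfl fun r hr => (sum_subset (subset_univ _) fun c _ hc => ?_).symm
          by_contra hpos
          exact hc (mem_biUnion.mpr ⟨r, hr, by simp [N, Nat.pos_of_ne_zero hpos]⟩)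
      _ = ∑ c ∈ S.biUnion N, ∑ r ∈ S, w r c := sum_comm
      _ ≤ ∑ c ∈ S.biUnion N, ∑ r, w r c :=
          sum_le_sum fun c _ => sum_le_sum_of_subset (subset_univ S)
      _ = k * #(S.biUnion N) := by simp [hw.2, mul_comm]
  obtain ⟨f, hf, hfN⟩ := (all_card_le_biUnion_card_iff_exists_injective N).mp hall
  exact ⟨Equiv.ofBijective f (Finite.injective_iff_bijective.mp hf),
    fun r => by simpa [N] using hfN r⟩

lemma sum_le_tropPer (A : Matrix m m Rmax) (σ : Equiv.Perm m) : ∑ i, A i (σ i) ≤ tropPer A :=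
  le_sup (f := fun σ : Equiv.Perm m => ∑ i, A i (σ i)) (mem_univ σ)

lemma exists_sum_eq_tropPer (A : Matrix m m Rmax) :
    ∃ σ : Equiv.Perm m, ∑ i, A i (σ i) = tropPer A := by
  obtain ⟨σ, -, h⟩ :=
    exists_mem_eq_sup univ univ_nonempty fun σ : Equiv.Perm m => ∑ i, A i (σ i)
  exact ⟨σ, h.symm⟩

lemma tropPer_of_add_const (B : Matrix m m Rmax) (c : Rmax) :
    tropPer (Matrix.of fun i j => B i j + c) = tropPer B + Fintype.card m • c := by
  simp only [tropPer, Matrix.of_apply, sum_add_distrib, sum_const, card_univ]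
  exact (apply_sup_eq_sup_comp_of_linearOrder (· + Fintype.card m • c)
    (fun _ _ h => add_le_add_left h _) (WithBot.bot_add _)).symm

/-- The tropical monomial `⨀ A r c ^ w r c` of the entries of `A` with multiplicities `w`. -/
def tropWeightedSum (A : Matrix m m Rmax) : Matrix m m ℕ →+ Rmax where
  toFun w := ∑ r, ∑ c, w r c • A r c
  map_zero' := by simp
  map_add' w₁ w₂ := by simp [add_nsmul, sum_add_distrib]

lemma tropWeightedSum_single (A : Matrix m m Rmax) (a b : m) :
    tropWeightedSum A (Matrix.single a b 1) = A a b := by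
  simp [tropWeightedSum, Matrix.single_apply, ite_smul, ite_and]

/-- Tropical Birkhoff–von Neumann: peeling off one permutation at a time (by Hall's theorem),
a matrix with line sums `k` is a sum of `k` permutation matrices. -/
lemma tropWeightedSum_le_nsmul_tropPer (A : Matrix m m Rmax) {w : Matrix m m ℕ} {k : ℕ}
    (hw : HasLineSums w (fun _ => k) (fun _ => k)) : tropWeightedSum A w ≤ k • tropPer A := by
  induction k generalizing w with
  | zero =>
    have : w = 0 := by
      ext r c
      exact sum_eq_zero_iff.mp (hw.1 r) c (mem_univ c)
    simp [this]
  | succ k ih =>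
    obtain ⟨σ, hσ⟩ := hw.exists_perm_forall_pos k.succ_pos
    set P : Matrix m m ℕ := ∑ r, Matrix.single r (σ r) 1
    have hP : HasLineSums P 1 1 := hasLineSums_sum_single_perm σ
    have hPw : ∀ r c, P r c ≤ w r c := by
      intro r c
      simp only [P, Matrix.sum_apply, Matrix.single_apply, ite_and, sum_ite_eq', mem_univ, if_true]
      split_ifs with h
      exacts [h ▸ hσ r, Nat.zero_le _]
    have hsplit : w = (w - P) + P := by
      ext r c
      simp [Nat.sub_add_cancel (hPw r c)]
    have hw' : HasLineSums (w - P) (fun _ => k) (fun _ => k) := by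
      refine ⟨fun r => ?_, fun c => ?_⟩ <;> simp only [Matrix.sub_apply]
      · rw [sum_tsub_distrib _ fun c _ => hPw r c, hw.1 r, hP.1 r]; rfl
      · rw [sum_tsub_distrib _ fun r _ => hPw r c, hw.2 c, hP.2 c]; rfl
    calc tropWeightedSum A w = tropWeightedSum A (w - P) + ∑ r, A r (σ r) := by
          conv_lhs => rw [hsplit]
          rw [map_add, map_sum]
          simp only [tropWeightedSum_single]
      _ ≤ k • tropPer A + tropPer A := add_le_add (ih hw') (sum_le_tropPer A σ)
      _ = (k + 1) • tropPer A := (succ_nsmul _ _).symm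

end Weights

section Adjoint

variable {n : ℕ}

lemma sum_ite_succAbove_eq (j r : Fin (n + 1)) :
    (∑ s, if j.succAbove s = r then 1 else 0 : ℕ) = if r = j then 0 else 1 := by
  rcases eq_or_ne r j with rfl | hrj
  · simp [Fin.succAbove_ne]
  · have := Fin.sum_univ_succAbove (fun x => if x = r then (1 : ℕ) else 0) j
    simp only [sum_ite_eq', mem_univ, if_true, if_neg hrj.symm] at this
    rw [if_neg hrj]
    omega

lemma sum_ite_perm_eq (ρ : Equiv.Perm (Fin (n + 1))) (r : Fin (n + 1)) :
    (∑ i, if r = ρ i then 0 else 1 : ℕ) = n := by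
  rw [Equiv.sum_comp ρ (fun x => if r = x then 0 else 1), Fin.sum_univ_succAbove _ r]
  simp [(Fin.succAbove_ne r _).symm]

lemma exists_perm_succAbove_eq (σ : Equiv.Perm (Fin (n + 1))) (j : Fin (n + 1)) :
    ∃ τ : Equiv.Perm (Fin n), ∀ t, (σ j).succAbove (τ t) = σ (j.succAbove t) := by
  have : ∀ t, ∃ s, (σ j).succAbove s = σ (j.succAbove t) := fun t =>
    Fin.exists_succAbove_eq (σ.injective.ne (Fin.succAbove_ne j t))
  choose f hf using this
  have hinj : Function.Injective f := fun a b hab => by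
    simpa using congrArg (σ j).succAbove hab |>.symm.trans (hf a) |>.symm.trans (hf b)
  exact ⟨Equiv.ofBijective f (Finite.injective_iff_bijective.mp hinj), hf⟩

/-- Laplace expansion, one term: the permutation `σ` restricts to the minor `A_{(j, σ j)}`. -/
lemma sum_le_add_tropAdj (A : Matrix (Fin (n + 1)) (Fin (n + 1)) Rmax)
    (σ : Equiv.Perm (Fin (n + 1))) (j : Fin (n + 1)) :
    ∑ x, A x (σ x) ≤ A j (σ j) + tropAdj A (σ j) j := by
  obtain ⟨τ, hτ⟩ := exists_perm_succAbove_eq σ j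
  rw [Fin.sum_univ_succAbove _ j]
  gcongr
  simpa [hτ, tropAdj] using sum_le_tropPer (A.submatrix j.succAbove (σ j).succAbove) τ

lemma exists_hasLineSums_tropAdj (A : Matrix (Fin (n + 1)) (Fin (n + 1)) Rmax)
    (i j : Fin (n + 1)) :
    ∃ M, tropWeightedSum A M = tropAdj A i j ∧
      HasLineSums M (fun r => if r = j then 0 else 1) (fun c => if c = i then 0 else 1) := by
  obtain ⟨τ, hτ⟩ := exists_sum_eq_tropPer (A.submatrix j.succAbove i.succAbove)
  refine ⟨∑ s, Matrix.single (j.succAbove s) (i.succAbove (τ s)) 1, ?_, ?_⟩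
  · simpa [map_sum, tropWeightedSum_single, tropAdj] using hτ
  · convert HasLineSums.sum fun s _ => hasLineSums_single (j.succAbove s) (i.succAbove (τ s))
      using 1 <;> funext x
    · rw [Finset.sum_apply, sum_ite_succAbove_eq]
    · rw [Finset.sum_apply, Equiv.sum_comp τ (fun s => if i.succAbove s = x then 1 else 0),
        sum_ite_succAbove_eq]

lemma tropPer_tropAdj_le (A : Matrix (Fin (n + 1)) (Fin (n + 1)) Rmax) :
    tropPer (tropAdj A) ≤ n • tropPer A := by
  refine Finset.sup_le fun ρ _ => ?_
  choose M hM hML using fun i => exists_hasLineSums_tropAdj A i (ρ i)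
  have hL : HasLineSums (∑ i, M i) (fun _ => n) (fun _ => n) := by
    convert HasLineSums.sum fun i _ => hML i using 1 <;> funext x <;> rw [Finset.sum_apply]
    · exact (sum_ite_perm_eq ρ x).symm
    · exact (sum_ite_perm_eq 1 x).symm
  simpa [hM] using tropWeightedSum_le_nsmul_tropPer A hL

lemma tropPer_tropMul_tropAdj_le (A : Matrix (Fin (n + 1)) (Fin (n + 1)) Rmax) :
    tropPer (tropMul A (tropAdj A)) ≤ (n + 1) • tropPer A := by
  refine Finset.sup_le fun ρ _ => ?_
  have : ∀ i, ∃ t, tropMul A (tropAdj A) i (ρ i) = A i t + tropAdj A t (ρ i) := fun i => by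
    obtain ⟨t, -, ht⟩ :=
      exists_mem_eq_sup univ univ_nonempty fun t => A i t + tropAdj A t (ρ i)
    exact ⟨t, ht⟩
  choose t ht using this
  choose M hM hML using fun i => exists_hasLineSums_tropAdj A (t i) (ρ i)
  have hL : HasLineSums (∑ i, (Matrix.single i (t i) 1 + M i)) (fun _ => n + 1)
      (fun _ => n + 1) := by
    convert HasLineSums.sum fun i _ => (hasLineSums_single i (t i)).add (hML i) using 1 <;>
      funext x <;> simp only [Finset.sum_apply, Pi.add_apply]
    · rw [sum_add_distrib, sum_ite_eq' univ x, if_pos (mem_univ x), sum_ite_perm_eq, add_comm]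
    · have : ∀ i, ((if t i = x then 1 else 0) + if x = t i then 0 else 1 : ℕ) = 1 := by
        grind
      simp [this]
  simpa [ht, hM, tropWeightedSum_single, sum_add_distrib] using
    tropWeightedSum_le_nsmul_tropPer A hL

lemma nsmul_tropPer_le_tropPer_tropMul_tropAdj (A : Matrix (Fin (n + 1)) (Fin (n + 1)) Rmax) :
    (n + 1) • tropPer A ≤ tropPer (tropMul A (tropAdj A)) := by
  obtain ⟨σ, hσ⟩ := exists_sum_eq_tropPer A
  calc (n + 1) • tropPer A = ∑ _j : Fin (n + 1), tropPer A := by simp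
    _ ≤ ∑ j, tropMul A (tropAdj A) j j := by
        gcongr with j
        calc tropPer A ≤ A j (σ j) + tropAdj A (σ j) j := hσ ▸ sum_le_add_tropAdj A σ j
          _ ≤ tropMul A (tropAdj A) j j :=
            le_sup (f := fun t => A j t + tropAdj A t j) (mem_univ (σ j))
    _ ≤ tropPer (tropMul A (tropAdj A)) := sum_le_tropPer _ 1

lemma tropPer_tropMul_tropAdj (A : Matrix (Fin (n + 1)) (Fin (n + 1)) Rmax) :
    tropPer (tropMul A (tropAdj A)) = (n + 1) • tropPer A :=
  (tropPer_tropMul_tropAdj_le A).antisymm (nsmul_tropPer_le_tropPer_tropMul_tropAdj A)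

-- The lower bound comes from `(n + 1) • per A ≤ per A + per (adj A)` by cancelling `per A`.
lemma tropPer_tropAdj {A : Matrix (Fin (n + 1)) (Fin (n + 1)) Rmax} (hA : tropPer A ≠ ⊥) :
    tropPer (tropAdj A) = n • tropPer A := by
  refine (tropPer_tropAdj_le A).antisymm ?_
  obtain ⟨σ, hσ⟩ := exists_sum_eq_tropPer A
  rw [← WithBot.add_le_add_iff_left hA, ← succ_nsmul']
  calc (n + 1) • tropPer A = ∑ _j : Fin (n + 1), tropPer A := by simp
    _ ≤ ∑ j, (A j (σ j) + tropAdj A (σ j) j) := by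
        gcongr with j
        exact hσ ▸ sum_le_add_tropAdj A σ j
    _ = tropPer A + ∑ i, tropAdj A i (σ.symm i) := by
        rw [sum_add_distrib, hσ, ← Equiv.sum_comp σ fun i => tropAdj A i (σ.symm i)]
        simp only [Equiv.symm_apply_apply]
    _ ≤ tropPer A + tropPer (tropAdj A) := by grw [sum_le_tropPer (tropAdj A) σ.symm]

end Adjoint

/-- for `A` nonsingular of size `n+1`:
`per(adj(A)) = n ⊙ per(A)`, `per(A ⊙ adj(A)) = (n+1) ⊙ per(A)`, and
`per(A^∇) = −per(A)`. -/
theorem tropPer_adj_qinv {n : ℕ} (A : Matrix (Fin (n+1)) (Fin (n+1)) Rmax)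
    (p : ℝ) (hp : tropPer A = (p : Rmax)) :
    tropPer (tropAdj A) = n • tropPer A ∧
    tropPer (tropMul A (tropAdj A)) = (n + 1) • tropPer A ∧
    tropPer (tropQInv A) = ((-p : ℝ) : Rmax) := by
  have hadj := tropPer_tropAdj (hp ▸ WithBot.coe_ne_bot)
  refine ⟨hadj, tropPer_tropMul_tropAdj A, ?_⟩
  rw [tropQInv, tropPer_of_add_const, hadj, hp, Fintype.card_fin, WithBot.unbotD_coe,
    ← WithBot.coe_nsmul, ← WithBot.coe_nsmul, ← WithBot.coe_add]
  congr 1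
  simp only [nsmul_eq_mul]
  push_cast
  ring
end
end
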